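/- In the weakly separable change-point model with the integrability, smoothness/i.i.d., fourth-moment and eigen-gap assumptions and sub-Gaussian standardized scores, and with the change-point estimator satisfying |τ̂ − τ*| = O_p(1), for each 1 ≤ r ≤ R the CUSUM processes at the estimated and true change-points satisfy max_{1≤j≤p} |⟨Δ̂_{τ̂}(s_j;·) − Δ̂_{τ*}(s_j;·), ψ_r⟩_{L²(T)}| = O_p((log p / n)^{1/2}). -/

import Mathlib

/-!
Write `⟪X_i(s_j), ψ_r⟫ = ⟪μ_i(s_j), ψ_r⟫ + ξ_{ir}(s_j)`. The difference of the CUSUM processes at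
`τ̂` and `τ*` is `n^{-1/2}` times the partial sum of these terms between `τ*` and `τ̂`, minus
`(τ̂ - τ*)/n` times their full sum. So on the event `|τ̂ - τ*| ≤ K` it is at most `3 K B / √n`
as soon as the `2K` terms nearest to `τ*` are bounded by `B` and the full sum by `n B`. With
`σ² = γ² M` a common variance proxy of all scores, the Chernoff bound and a union bound over the
`p` locations show that some score near `τ*` exceeds `2σ √(log p)`, or some full sum of scores
exceeds `2σ √(n log p)`, with probability at most `2 (2K + 1) / p → 0`. Off that event
`B = (C ‖ψ_r‖ + 2σ) √(log p)` works, `C` bounding the mean curves, which gives the rate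
`√(log p / n)`.
-/

open MeasureTheory ProbabilityTheory Filter Real
open scoped ENNReal NNReal Topology RealInnerProductSpace

namespace SpatialFDA13

variable {Ω : Type*} [MeasurableSpace Ω]
variable {H : Type*} [NormedAddCommGroup H] [InnerProductSpace ℝ H] [CompleteSpace H]
  [MeasurableSpace H] [BorelSpace H] [SecondCountableTopology H]

/-- `IsBigOp P Z a` formalizes `Z_n = O_p(a_n)` (as (n,p)→∞, indexed by n). -/
def IsBigOp (P : Measure Ω) (Z : ℕ → Ω → ℝ) (a : ℕ → ℝ) : Prop :=
  ∀ ε : ℝ, 0 < ε → ∃ M : ℝ, 0 < M ∧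
    ∀ᶠ n in Filter.atTop, P {ω | M * a n < |Z n ω|} ≤ ENNReal.ofReal ε

/-- `IsLittleOp P Z a` formalizes `Z_n = o_p(a_n)`. -/
def IsLittleOp (P : Measure Ω) (Z : ℕ → Ω → ℝ) (a : ℕ → ℝ) : Prop :=
  ∀ ε : ℝ, 0 < ε →
    Filter.Tendsto (fun n => P {ω | ε * a n < |Z n ω|}) Filter.atTop (nhds 0)

/-- The scaled CUSUM process `Δ̂_t = m^{-1/2} (Σ_{i<t} Y_i − (t/m) Σ_{i<m} Y_i)`
of a sample `Y` of size `m`. -/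
noncomputable def cusum (m t : ℕ) (Y : ℕ → Ω → H) (ω : Ω) : H :=
  ((m : ℝ) ^ (-(1:ℝ)/2)) •
    ((∑ i ∈ Finset.range t, Y i ω) - (((t : ℝ) / (m : ℝ)) • ∑ i ∈ Finset.range m, Y i ω))

/-- A sequence (indexed by the sample size `n`) of spatially indexed functional
change-point models: `p n` spatial locations `s n j`, change point `τ n`, pre- and
post-change mean curves `μ0 n j`, `μ1 n j` in `H = L²(T)`, error curves `ε n i j`,
a common orthonormal system `ψ` of `H` (the weak-separability basis), a spatial
kernel `K` and bandwidths `h n`. -/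
structure SpatialModel (Ω : Type*) (H : Type*) [NormedAddCommGroup H]
    [InnerProductSpace ℝ H] where
  p : ℕ → ℕ
  τ : ℕ → ℕ
  μ0 : (n : ℕ) → Fin (p n) → H
  μ1 : (n : ℕ) → Fin (p n) → H
  ε : (n : ℕ) → ℕ → Fin (p n) → Ω → H
  ψ : ℕ → H
  s : (n : ℕ) → Fin (p n) → ℝ × ℝ
  K : ℝ × ℝ → ℝ
  h : ℕ → ℝ

namespace SpatialModel

variable (M : SpatialModel Ω H) (P : Measure Ω)

/-- The observations `X_i(s_j;·) = μ_i(s_j;·) + ε_i(s_j;·)`, with mean `μ0` up to the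
change point `τ n` and `μ1` afterwards. -/
noncomputable def obs (n i : ℕ) (j : Fin (M.p n)) (ω : Ω) : H :=
  (if i < M.τ n then M.μ0 n j else M.μ1 n j) + M.ε n i j ω

/-- The FPC scores `ξ_{ir}(s_j) = ⟨ε_i(s_j;·), ψ_r⟩`. -/
noncomputable def score (n i r : ℕ) (j : Fin (M.p n)) (ω : Ω) : ℝ :=
  ⟪M.ε n i j ω, M.ψ r⟫

/-- The score variances `λ_{r,j} = E[ξ_{ir}(s_j)²]`. -/
noncomputable def lamrj (n r : ℕ) (j : Fin (M.p n)) : ℝ :=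
  ∫ ω, (M.score n 0 r j ω) ^ 2 ∂P

/-- The score covariances `σ_r(s_j,s_k) = E[ξ_{ir}(s_j) ξ_{ir}(s_k)]`. -/
noncomputable def sigr (n r : ℕ) (j k : Fin (M.p n)) : ℝ :=
  ∫ ω, M.score n 0 r j ω * M.score n 0 r k ω ∂P

/-- The spatial correlations `ρ_r(s_j,s_k)`. -/
noncomputable def rhor (n r : ℕ) (j k : Fin (M.p n)) : ℝ :=
  M.sigr P n r j k / Real.sqrt (M.lamrj P n r j * M.lamrj P n r k)

/-- The averaged eigenvalues `λ_r = p⁻¹ Σ_j λ_{r,j}`. -/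
noncomputable def lambar (n r : ℕ) : ℝ :=
  (M.p n : ℝ)⁻¹ * ∑ j : Fin (M.p n), M.lamrj P n r j

/-- The standardized signals `δ*_{j,r} = λ_{r,j}^{-1/2} ⟨μ1(s_j;·) − μ0(s_j;·), ψ_r⟩`. -/
noncomputable def deltaStar (n : ℕ) (j : Fin (M.p n)) (r : ℕ) : ℝ :=
  ⟪M.μ1 n j - M.μ0 n j, M.ψ r⟫ / Real.sqrt (M.lamrj P n r j)

/-- The ℓ²-norm `‖δ*_j‖` of the standardized signal vector over `r < R`. -/
noncomputable def deltaNorm (R n : ℕ) (j : Fin (M.p n)) : ℝ :=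
  Real.sqrt (∑ r ∈ Finset.range R, (M.deltaStar P n j r) ^ 2)

/-- The half-sample size `m = n/2`. -/
def half (n : ℕ) : ℕ := n / 2

/-- The odd-indexed (1-based) half sample `X_O`. -/
noncomputable def obsO (n i : ℕ) (j : Fin (M.p n)) (ω : Ω) : H := M.obs n (2 * i) j ω

/-- The even-indexed (1-based) half sample `X_E`. -/
noncomputable def obsE (n i : ℕ) (j : Fin (M.p n)) (ω : Ω) : H := M.obs n (2 * i + 1) j ω

/-- The change point of the odd half sample corresponding to a full-sample index `t`. -/
def idxO (t : ℕ) : ℕ := (t + 1) / 2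

/-- The change point of the even half sample corresponding to a full-sample index `t`. -/
def idxE (t : ℕ) : ℕ := t / 2

/-- The oracle scaled CUSUM statistic `η*_{j,r}` (full sample, true change point,
true eigenfunctions and score variances). -/
noncomputable def etaStarFull (n : ℕ) (j : Fin (M.p n)) (r : ℕ) (ω : Ω) : ℝ :=
  (Real.sqrt (M.lamrj P n r j))⁻¹ *
    ⟪cusum n (M.τ n) (fun i => M.obs n i j) ω, M.ψ r⟫

/-- The oracle statistic `η*^O_{j,r}` computed on the odd half sample. -/
noncomputable def etaStarO (n : ℕ) (j : Fin (M.p n)) (r : ℕ) (ω : Ω) : ℝ :=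
  (Real.sqrt (M.lamrj P n r j))⁻¹ *
    ⟪cusum (half n) (idxO (M.τ n)) (fun i => M.obsO n i j) ω, M.ψ r⟫

/-- The oracle statistic `η*^E_{j,r}` computed on the even half sample. -/
noncomputable def etaStarE (n : ℕ) (j : Fin (M.p n)) (r : ℕ) (ω : Ω) : ℝ :=
  (Real.sqrt (M.lamrj P n r j))⁻¹ *
    ⟪cusum (half n) (idxE (M.τ n)) (fun i => M.obsE n i j) ω, M.ψ r⟫

/-- The kernel weight `K_h(s_k − s_j) = K((s_k − s_j)/h)/h²`. -/
noncomputable def KHw (n : ℕ) (k j : Fin (M.p n)) : ℝ :=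
  M.K ((M.h n)⁻¹ • (M.s n k - M.s n j)) / (M.h n) ^ 2

/-- The kernel-weighted oracle statistic `η̃*_{j,r}` built from the full-sample `η*`. -/
noncomputable def etaTildeStarFull (n : ℕ) (j : Fin (M.p n)) (r : ℕ) (ω : Ω) : ℝ :=
  (∑ k : Fin (M.p n), M.KHw n k j * M.etaStarFull P n k r ω) /
    (∑ k : Fin (M.p n), M.KHw n k j)

/-- The kernel-weighted oracle statistic `η̃*^E_{j,r}` on the even half sample. -/
noncomputable def etaTildeStarE (n : ℕ) (j : Fin (M.p n)) (r : ℕ) (ω : Ω) : ℝ :=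
  (∑ k : Fin (M.p n), M.KHw n k j * M.etaStarE P n k r ω) /
    (∑ k : Fin (M.p n), M.KHw n k j)

/-- The oracle ranking statistic `W*_j = Σ_{r<R} η*^O_{j,r} η̃*^E_{j,r}`. -/
noncomputable def Wstar (R n : ℕ) (j : Fin (M.p n)) (ω : Ω) : ℝ :=
  ∑ r ∈ Finset.range R, M.etaStarO P n j r ω * M.etaTildeStarE P n j r ω

/-- The full-sample differencing-based marginal covariance estimator `Ĥ` as an
operator on `H`. -/
noncomputable def HhatFull (n : ℕ) (ω : Ω) : H →L[ℝ] H :=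
  (2 * (M.p n : ℝ) * ((n : ℝ) - 1))⁻¹ •
    ∑ i ∈ Finset.range (n - 1), ∑ j : Fin (M.p n),
      ((innerSL ℝ (M.obs n (i+1) j ω - M.obs n i j ω)).smulRight
        (M.obs n (i+1) j ω - M.obs n i j ω))

/-- The differencing-based marginal covariance estimator computed on the odd half. -/
noncomputable def HhatO (n : ℕ) (ω : Ω) : H →L[ℝ] H :=
  (2 * (M.p n : ℝ) * ((half n : ℝ) - 1))⁻¹ •
    ∑ i ∈ Finset.range (half n - 1), ∑ j : Fin (M.p n),
      ((innerSL ℝ (M.obsO n (i+1) j ω - M.obsO n i j ω)).smulRight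
        (M.obsO n (i+1) j ω - M.obsO n i j ω))

/-- The differencing-based marginal covariance estimator computed on the even half. -/
noncomputable def HhatE (n : ℕ) (ω : Ω) : H →L[ℝ] H :=
  (2 * (M.p n : ℝ) * ((half n : ℝ) - 1))⁻¹ •
    ∑ i ∈ Finset.range (half n - 1), ∑ j : Fin (M.p n),
      ((innerSL ℝ (M.obsE n (i+1) j ω - M.obsE n i j ω)).smulRight
        (M.obsE n (i+1) j ω - M.obsE n i j ω))

/-- The full-sample differencing-based cross-covariance estimator `Σ̂_r(j,k)`,
computed using an estimated eigenfunction family `ψhat`. -/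
noncomputable def SighatFull (ψhat : ℕ → ℕ → Ω → H) (n r : ℕ) (j k : Fin (M.p n))
    (ω : Ω) : ℝ :=
  (2 * ((n : ℝ) - 1))⁻¹ * ∑ i ∈ Finset.range (n - 1),
    ⟪M.obs n (i+1) j ω - M.obs n i j ω, ψhat n r ω⟫ *
    ⟪M.obs n (i+1) k ω - M.obs n i k ω, ψhat n r ω⟫

/-- The cross-covariance estimator computed on the odd half. -/
noncomputable def SighatO (ψhatO : ℕ → ℕ → Ω → H) (n r : ℕ) (j k : Fin (M.p n))
    (ω : Ω) : ℝ :=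
  (2 * ((half n : ℝ) - 1))⁻¹ * ∑ i ∈ Finset.range (half n - 1),
    ⟪M.obsO n (i+1) j ω - M.obsO n i j ω, ψhatO n r ω⟫ *
    ⟪M.obsO n (i+1) k ω - M.obsO n i k ω, ψhatO n r ω⟫

/-- The cross-covariance estimator computed on the even half. -/
noncomputable def SighatE (ψhatE : ℕ → ℕ → Ω → H) (n r : ℕ) (j k : Fin (M.p n))
    (ω : Ω) : ℝ :=
  (2 * ((half n : ℝ) - 1))⁻¹ * ∑ i ∈ Finset.range (half n - 1),
    ⟪M.obsE n (i+1) j ω - M.obsE n i j ω, ψhatE n r ω⟫ *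
    ⟪M.obsE n (i+1) k ω - M.obsE n i k ω, ψhatE n r ω⟫

/-- The fully estimated scaled CUSUM statistic `η̂_{j,r}` on the full sample, at the
estimated change point `τ̂`. -/
noncomputable def etaHatFull (ψhat : ℕ → ℕ → Ω → H) (τhat : ℕ → Ω → ℕ)
    (n : ℕ) (j : Fin (M.p n)) (r : ℕ) (ω : Ω) : ℝ :=
  (Real.sqrt (M.SighatFull ψhat n r j j ω))⁻¹ *
    ⟪cusum n (τhat n ω) (fun i => M.obs n i j) ω, ψhat n r ω⟫

/-- The estimated statistic `η̂^O_{j,r}` on the odd half sample at `τ̂`. -/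
noncomputable def etaHatO (ψhatO : ℕ → ℕ → Ω → H) (τhat : ℕ → Ω → ℕ)
    (n : ℕ) (j : Fin (M.p n)) (r : ℕ) (ω : Ω) : ℝ :=
  (Real.sqrt (M.SighatO ψhatO n r j j ω))⁻¹ *
    ⟪cusum (half n) (idxO (τhat n ω)) (fun i => M.obsO n i j) ω, ψhatO n r ω⟫

/-- The estimated statistic `η̂^E_{j,r}` on the even half sample at `τ̂`. -/
noncomputable def etaHatE (ψhatE : ℕ → ℕ → Ω → H) (τhat : ℕ → Ω → ℕ)
    (n : ℕ) (j : Fin (M.p n)) (r : ℕ) (ω : Ω) : ℝ :=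
  (Real.sqrt (M.SighatE ψhatE n r j j ω))⁻¹ *
    ⟪cusum (half n) (idxE (τhat n ω)) (fun i => M.obsE n i j) ω, ψhatE n r ω⟫

/-- The kernel-weighted estimated statistic `η̃^E_{j,r}` on the even half. -/
noncomputable def etaTildeHatE (ψhatE : ℕ → ℕ → Ω → H) (τhat : ℕ → Ω → ℕ)
    (n : ℕ) (j : Fin (M.p n)) (r : ℕ) (ω : Ω) : ℝ :=
  (∑ k : Fin (M.p n), M.KHw n k j * M.etaHatE ψhatE τhat n k r ω) /
    (∑ k : Fin (M.p n), M.KHw n k j)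

/-- The fSDA ranking statistic `W_j = Σ_{r<R} η̂^O_{j,r} η̃^E_{j,r}`. -/
noncomputable def West (R : ℕ) (ψhatO ψhatE : ℕ → ℕ → Ω → H) (τhat : ℕ → Ω → ℕ)
    (n : ℕ) (j : Fin (M.p n)) (ω : Ω) : ℝ :=
  ∑ r ∈ Finset.range R, M.etaHatO ψhatO τhat n j r ω * M.etaTildeHatE ψhatE τhat n j r ω

open Classical in
/-- The set `A^c` of null locations (no mean change). -/
noncomputable def Ac (n : ℕ) : Finset (Fin (M.p n)) :=
  Finset.univ.filter (fun j => M.μ0 n j = M.μ1 n j)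

/-- The σ-algebra generated by the even half sample `X_E` (equivalently, by the
even-indexed errors). -/
def sigmaE (n : ℕ) : MeasurableSpace Ω :=
  MeasurableSpace.comap (fun ω => fun (i : ℕ) (j : Fin (M.p n)) => M.ε n (2*i+1) j ω)
    inferInstance

/-- The conditional tail function `G(t) = p₀⁻¹ Σ_{j ∈ A^c} Pr(W*_j ≥ t | X_E)`. -/
noncomputable def Gplus (R n : ℕ) (t : ℝ) (ω : Ω) : ℝ :=
  ((M.Ac n).card : ℝ)⁻¹ * ∑ j ∈ M.Ac n,
    MeasureTheory.condExp (M.sigmaE n) P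
      (fun ω' => if t ≤ M.Wstar P R n j ω' then (1:ℝ) else 0) ω

/-- The conditional tail function `G₋(t) = p₀⁻¹ Σ_{j ∈ A^c} Pr(W*_j ≤ −t | X_E)`. -/
noncomputable def Gminus (R n : ℕ) (t : ℝ) (ω : Ω) : ℝ :=
  ((M.Ac n).card : ℝ)⁻¹ * ∑ j ∈ M.Ac n,
    MeasureTheory.condExp (M.sigmaE n) P
      (fun ω' => if M.Wstar P R n j ω' ≤ -t then (1:ℝ) else 0) ω

/-- `t* = G₋^{-1}(α b_p / p₀) = inf{t ≥ 0 : G₋(t) ≤ α b_p / p₀}`. -/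
noncomputable def tstar (R : ℕ) (α : ℝ) (b : ℕ → ℕ) (n : ℕ) (ω : Ω) : ℝ :=
  sInf {t : ℝ | 0 ≤ t ∧ M.Gminus P R n t ω ≤ α * (b n : ℝ) / ((M.Ac n).card : ℝ)}

end SpatialModel

open Classical in
/-- `#{j : t ≤ W j}`. -/
noncomputable def countGe {q : ℕ} (W : Fin q → ℝ) (t : ℝ) : ℕ :=
  (Finset.univ.filter (fun j => t ≤ W j)).card

open Classical in
/-- `#{j : W j ≤ −t}`. -/
noncomputable def countLe {q : ℕ} (W : Fin q → ℝ) (t : ℝ) : ℕ :=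
  (Finset.univ.filter (fun j => W j ≤ -t)).card

/-- The candidate thresholds `{t > 0 : (1 + #{W_j ≤ −t}) / (#{W_j ≥ t} ∨ 1) ≤ α}`. -/
def threshSet {q : ℕ} (W : Fin q → ℝ) (α : ℝ) : Set ℝ :=
  {t : ℝ | 0 < t ∧ (1 + (countLe W t : ℝ)) ≤ α * max (countGe W t : ℝ) 1}

open Classical in
/-- The fSDA discovery set `{j : W_j ≥ L}`, where `L = inf` of the candidate
thresholds; the empty set if no candidate threshold exists (corresponding to
`L = +∞`). -/
noncomputable def discoverySet {q : ℕ} (W : Fin q → ℝ) (α : ℝ) : Finset (Fin q) :=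
  if (threshSet W α).Nonempty then
    Finset.univ.filter (fun j => sInf (threshSet W α) ≤ W j)
  else ∅

/-- The false discovery proportion of the fSDA procedure:
`FDP_w(L) = #{j ∈ A^c : W_j ≥ L} / (#{j : W_j ≥ L} ∨ 1)`. -/
noncomputable def FDPw {q : ℕ} (W : Fin q → ℝ) (α : ℝ) (Ac : Finset (Fin q)) : ℝ :=
  ((discoverySet W α ∩ Ac).card : ℝ) / max ((discoverySet W α).card : ℝ) 1

lemma _root_.ProbabilityTheory.HasSubgaussianMGF.measureReal_lt_abs_le {P : Measure Ω}
    [IsFiniteMeasure P] {X : Ω → ℝ} {c : ℝ≥0} (h : HasSubgaussianMGF X c P) {t : ℝ}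
    (ht : 0 ≤ t) : P.real {ω | t < |X ω|} ≤ 2 * exp (-t ^ 2 / (2 * c)) :=
  calc P.real {ω | t < |X ω|} ≤ P.real ({ω | t ≤ X ω} ∪ {ω | t ≤ (-X) ω}) :=
        measureReal_mono fun ω (hω : t < |X ω|) => (lt_abs.mp hω).imp le_of_lt le_of_lt
    _ ≤ P.real {ω | t ≤ X ω} + P.real {ω | t ≤ (-X) ω} := measureReal_union_le _ _
    _ ≤ 2 * exp (-t ^ 2 / (2 * c)) := by
        linarith [h.measure_ge_le ht, h.neg.measure_ge_le ht]

lemma _root_.ProbabilityTheory.HasSubgaussianMGF.measureReal_two_sqrt_mul_lt_abs_le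
    {P : Measure Ω} [IsFiniteMeasure P] {X : Ω → ℝ} {c : ℝ≥0} (h : HasSubgaussianMGF X c P)
    (hc : 0 < c) {L : ℝ} (hL : 0 ≤ L) :
    P.real {ω | 2 * √(c * L) < |X ω|} ≤ 2 * exp (-(2 * L)) := by
  have hc' : (0 : ℝ) < c := hc
  convert h.measureReal_lt_abs_le (by positivity : 0 ≤ 2 * √(c * L)) using 3
  rw [mul_pow, sq_sqrt (by positivity)]
  field_simp

def exceedanceEvent {α ι : Type*} (ξ : ι → ℕ → α → ℝ) (W : Finset ℕ) (n : ℕ) (b : ℝ) :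
    Set α :=
  ⋃ j, ({ω | b * √n < |∑ i ∈ Finset.range n, ξ j i ω|} ∪ ⋃ i ∈ W, {ω | b < |ξ j i ω|})

lemma abs_le_of_notMem_exceedanceEvent {α ι : Type*} {ξ : ι → ℕ → α → ℝ} {W : Finset ℕ}
    {n : ℕ} {b : ℝ} {ω : α} (h : ω ∉ exceedanceEvent ξ W n b) (j : ι) :
    |∑ i ∈ Finset.range n, ξ j i ω| ≤ b * √n ∧ ∀ i ∈ W, |ξ j i ω| ≤ b := by
  simp only [exceedanceEvent, Set.mem_iUnion, Set.mem_union, Set.mem_ofPred_eq, not_exists,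
    not_or, not_lt] at h
  exact h j

lemma measureReal_exceedanceEvent_le {P : Measure Ω} [IsProbabilityMeasure P] {ι : Type*}
    [Fintype ι] {ξ : ι → ℕ → Ω → ℝ} {c : ℝ≥0} (hc : 0 < c)
    (hξ : ∀ j i, HasSubgaussianMGF (ξ j i) c P) (hind : ∀ j, iIndepFun (ξ j) P)
    (W : Finset ℕ) {n : ℕ} (hn : 0 < n) {L : ℝ} (hL : 0 ≤ L) :
    P.real (exceedanceEvent ξ W n (2 * √(c * L))) ≤
      Fintype.card ι * ((W.card + 1) * (2 * exp (-(2 * L)))) := by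
  have hsum : ∀ j, P.real {ω | 2 * √(c * L) * √n < |∑ i ∈ Finset.range n, ξ j i ω|} ≤
      2 * exp (-(2 * L)) := by
    intro j
    have h := (HasSubgaussianMGF.sum_of_iIndepFun (hind j) (s := Finset.range n)
      fun i _ => hξ j i).measureReal_two_sqrt_mul_lt_abs_le (by simpa using ⟨hn, hc⟩) hL
    convert h using 5
    simp only [Finset.sum_const, Finset.card_range, nsmul_eq_mul, NNReal.coe_mul,
      NNReal.coe_natCast]
    rw [mul_assoc, ← sqrt_mul (by positivity), mul_comm (n : ℝ), mul_right_comm]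
  calc P.real (exceedanceEvent ξ W n (2 * √(c * L)))
      ≤ ∑ j : ι, (2 * exp (-(2 * L)) + ∑ i ∈ W, 2 * exp (-(2 * L))) := by
        refine (measureReal_iUnion_fintype_le _).trans (Finset.sum_le_sum fun j _ => ?_)
        refine (measureReal_union_le _ _).trans (add_le_add (hsum j) ?_)
        exact (measureReal_biUnion_finset_le _ _).trans (Finset.sum_le_sum fun i _ =>
          (hξ j i).measureReal_two_sqrt_mul_lt_abs_le hc hL)
    _ = Fintype.card ι * ((W.card + 1) * (2 * exp (-(2 * L)))) := by
        simp only [Finset.sum_const, Finset.card_univ, nsmul_eq_mul]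
        ring

lemma tendsto_measureReal_exceedanceEvent {P : Measure Ω} [IsProbabilityMeasure P] {p : ℕ → ℕ}
    (hp : Tendsto p atTop atTop) {ξ : (n : ℕ) → Fin (p n) → ℕ → Ω → ℝ} {c : ℝ≥0} (hc : 0 < c)
    (hξ : ∀ n j i, HasSubgaussianMGF (ξ n j i) c P) (hind : ∀ n j, iIndepFun (ξ n j) P)
    {W : ℕ → Finset ℕ} {k : ℕ} (hW : ∀ n, (W n).card ≤ k) :
    Tendsto (fun n => P.real (exceedanceEvent (ξ n) (W n) n (2 * √(c * log (p n)))))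
      atTop (𝓝 0) := by
  refine squeeze_zero' (.of_forall fun n => measureReal_nonneg) ?_
    ((tendsto_const_div_atTop_nhds_zero_nat (2 * (k + 1) : ℝ)).comp hp)
  filter_upwards [eventually_gt_atTop 0, hp.eventually_gt_atTop 0] with n hn hpn
  have hp' : (0 : ℝ) < p n := by exact_mod_cast hpn
  have hexp : exp (-(2 * log (p n))) = ((p n : ℝ) ^ 2)⁻¹ := by
    rw [show (2 : ℝ) = ((2 : ℕ) : ℝ) by norm_num, ← log_pow, exp_neg, exp_log (by positivity)]
  have hWk : ((W n).card : ℝ) ≤ k := by exact_mod_cast hW n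
  calc P.real (exceedanceEvent (ξ n) (W n) n (2 * √(c * log (p n))))
      ≤ p n * (((W n).card + 1) * (2 * ((p n : ℝ) ^ 2)⁻¹)) := by
        simpa [hexp] using measureReal_exceedanceEvent_le hc (hξ n) (hind n) (W n) hn
          (log_natCast_nonneg (p n))
    _ ≤ p n * ((k + 1) * (2 * ((p n : ℝ) ^ 2)⁻¹)) := by gcongr
    _ = 2 * (k + 1) / p n := by field_simp

lemma norm_sum_range_sub_sum_range_le {E : Type*} [SeminormedAddCommGroup E] {f : ℕ → E}
    {s t K : ℕ} {B : ℝ} (hB0 : 0 ≤ B) (hst : s ≤ t + K) (hts : t ≤ s + K)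
    (hB : ∀ i ∈ Finset.Ico (t - K) (t + K), ‖f i‖ ≤ B) :
    ‖∑ i ∈ Finset.range s, f i - ∑ i ∈ Finset.range t, f i‖ ≤ 2 * K * B := by
  have hIco : ∀ {a b : ℕ}, t - K ≤ a → b ≤ t + K → ‖∑ i ∈ Finset.Ico a b, f i‖ ≤ 2 * K * B := by
    intro a b ha hb
    have hsub : Finset.Ico a b ⊆ Finset.Ico (t - K) (t + K) := Finset.Ico_subset_Ico ha hb
    have hcard : ((Finset.Ico a b).card : ℝ) ≤ 2 * K := by
      have := Finset.card_le_card hsub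
      simp only [Nat.card_Ico] at this ⊢
      exact_mod_cast (by omega : b - a ≤ 2 * K)
    calc ‖∑ i ∈ Finset.Ico a b, f i‖ ≤ ∑ i ∈ Finset.Ico a b, ‖f i‖ := norm_sum_le _ _
      _ ≤ ∑ _i ∈ Finset.Ico a b, B := Finset.sum_le_sum fun i hi => hB i (hsub hi)
      _ ≤ 2 * K * B := by
        rw [Finset.sum_const, nsmul_eq_mul]
        gcongr
  rcases le_total t s with h | h
  · rw [← Finset.sum_Ico_eq_sub f h]
    exact hIco (Nat.sub_le t K) hst
  · rw [norm_sub_rev, ← Finset.sum_Ico_eq_sub f h]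
    exact hIco (by omega) (Nat.le_add_right t K)

lemma inner_cusum {E : Type*} [NormedAddCommGroup E] [InnerProductSpace ℝ E] (m t : ℕ)
    {α : Type*} (Y : ℕ → α → E) (ω : α) (v : E) :
    ⟪cusum m t Y ω, v⟫ = cusum m t (fun i ω => ⟪Y i ω, v⟫) ω := by
  simp only [cusum, inner_smul_left, inner_sub_left, sum_inner, conj_trivial, smul_eq_mul]

lemma cusum_sub_cusum {α : Type*} (m s t : ℕ) (Y : ℕ → α → ℝ) (ω : α) :
    cusum m s Y ω - cusum m t Y ω = (√m)⁻¹ * ((∑ i ∈ Finset.range s, Y i ω -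
      ∑ i ∈ Finset.range t, Y i ω) - ((s - t : ℝ) / m) * ∑ i ∈ Finset.range m, Y i ω) := by
  rw [cusum, cusum, show -(1 : ℝ) / 2 = -(1 / 2) by ring, rpow_neg (Nat.cast_nonneg m),
    ← sqrt_eq_rpow, smul_eq_mul, smul_eq_mul, smul_eq_mul, smul_eq_mul]
  ring

lemma abs_cusum_sub_cusum_le {α : Type*} {Y : ℕ → α → ℝ} {ω : α} {m s t K : ℕ} {B : ℝ}
    (hm : 0 < m) (hst : s ≤ t + K) (hts : t ≤ s + K)
    (hB : ∀ i ∈ Finset.Ico (t - K) (t + K), |Y i ω| ≤ B)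
    (hS : |∑ i ∈ Finset.range m, Y i ω| ≤ m * B) :
    |cusum m s Y ω - cusum m t Y ω| ≤ 3 * K * B / √m := by
  have hm' : (0 : ℝ) < m := by exact_mod_cast hm
  have hB0 : 0 ≤ B := nonneg_of_mul_nonneg_right ((abs_nonneg _).trans hS) hm'
  have hwindow : |∑ i ∈ Finset.range s, Y i ω - ∑ i ∈ Finset.range t, Y i ω| ≤ 2 * K * B :=
    norm_sum_range_sub_sum_range_le (f := fun i => Y i ω) hB0 hst hts hB
  have hshift : |(s - t : ℝ)| ≤ K := by
    have h₁ : (s : ℝ) ≤ t + K := by exact_mod_cast hst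
    have h₂ : (t : ℝ) ≤ s + K := by exact_mod_cast hts
    exact abs_sub_le_iff.2 ⟨by linarith, by linarith⟩
  have hdrift : |(s - t : ℝ) / m * ∑ i ∈ Finset.range m, Y i ω| ≤ K * B :=
    calc |(s - t : ℝ) / m * ∑ i ∈ Finset.range m, Y i ω|
        = |(s - t : ℝ)| / m * |∑ i ∈ Finset.range m, Y i ω| := by
          rw [abs_mul, abs_div, Nat.abs_cast]
      _ ≤ K / m * (m * B) := by gcongr
      _ = K * B := by field_simp
  rw [cusum_sub_cusum, abs_mul, abs_inv, abs_of_nonneg (sqrt_nonneg _), inv_mul_eq_div]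
  gcongr
  linarith [abs_sub _ _ |>.trans (add_le_add hwindow hdrift)]

lemma isBigOp_of_forall_le_off {P : Measure Ω} [IsFiniteMeasure P] {Z D : ℕ → Ω → ℝ}
    {a : ℕ → ℝ} (ha : ∀ n, 0 ≤ a n) (hD : IsBigOp P D fun _ => 1)
    (h : ∀ K : ℝ, ∃ C : ℝ, ∃ B : ℕ → Set Ω, Tendsto (fun n => P.real (B n)) atTop (𝓝 0) ∧
      ∀ᶠ n in atTop, ∀ ω ∉ B n, |D n ω| ≤ K → |Z n ω| ≤ C * a n) :
    IsBigOp P Z a := by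
  intro ε hε
  obtain ⟨K, -, hK⟩ := hD (ε / 2) (half_pos hε)
  obtain ⟨C, B, hB, hZ⟩ := h K
  refine ⟨max C 1, by positivity, ?_⟩
  filter_upwards [hK, hZ, hB.eventually (ge_mem_nhds (half_pos hε))] with n hKn hZn hBn
  have hsub : {ω | max C 1 * a n < |Z n ω|} ⊆ {ω | K * 1 < |D n ω|} ∪ B n := by
    intro ω hω
    by_contra hgood
    simp only [Set.mem_union, Set.mem_ofPred_eq, not_or, not_lt, mul_one] at hgood hω
    exact (hω.trans_le ((hZn ω hgood.2 hgood.1).trans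
      (mul_le_mul_of_nonneg_right (le_max_left C 1) (ha n)))).false
  calc P {ω | max C 1 * a n < |Z n ω|} ≤ P {ω | K * 1 < |D n ω|} + P (B n) :=
        (measure_mono hsub).trans (measure_union_le _ _)
    _ ≤ ENNReal.ofReal (ε / 2) + ENNReal.ofReal (ε / 2) := by
        gcongr
        exact (ENNReal.le_ofReal_iff_toReal_le (measure_ne_top _ _) (half_pos hε).le).2 hBn
    _ = ENNReal.ofReal ε := by
        rw [← ENNReal.ofReal_add (by positivity) (by positivity), add_halves]

lemma le_add_natCeil_of_abs_sub_le {a b : ℕ} {K : ℝ} (h : |(a : ℝ) - b| ≤ K) :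
    a ≤ b + ⌈K⌉₊ := by
  have : (a : ℝ) ≤ b + ⌈K⌉₊ := by linarith [(abs_le.1 h).2, Nat.le_ceil K]
  exact_mod_cast this

lemma one_le_log_of_three_le {x : ℝ} (hx : 3 ≤ x) : 1 ≤ log x := by
  rw [← log_exp 1]
  exact log_le_log (exp_pos 1) ((exp_one_lt_d9.trans (by norm_num)).le.trans hx)

namespace SpatialModel

variable {α E : Type*} [NormedAddCommGroup E] [InnerProductSpace ℝ E] (M : SpatialModel α E)

def mean (n i : ℕ) (j : Fin (M.p n)) : E := if i < M.τ n then M.μ0 n j else M.μ1 n j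

lemma inner_obs (n i r : ℕ) (j : Fin (M.p n)) (ω : α) :
    ⟪M.obs n i j ω, M.ψ r⟫ = ⟪M.mean n i j, M.ψ r⟫ + M.score n i r j ω :=
  inner_add_left _ _ _

lemma abs_inner_mean_le {n : ℕ} {j : Fin (M.p n)} {C : ℝ}
    (hC : ‖M.μ0 n j‖ ≤ C ∧ ‖M.μ1 n j‖ ≤ C) (i r : ℕ) :
    |⟪M.mean n i j, M.ψ r⟫| ≤ C * ‖M.ψ r‖ := by
  refine (abs_real_inner_le_norm _ _).trans (mul_le_mul_of_nonneg_right ?_ (norm_nonneg _))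
  unfold mean
  split_ifs
  exacts [hC.1, hC.2]

section Scores

variable [MeasurableSpace α] {P : Measure α}

lemma lamrj_nonneg (n r : ℕ) (j : Fin (M.p n)) : 0 ≤ M.lamrj P n r j :=
  integral_nonneg fun _ => sq_nonneg _

lemma lamrj_le_of_tsum_lt {n r : ℕ} {j : Fin (M.p n)} {Λ : ℝ}
    (hs : Summable fun r' => M.lamrj P n r' j) (h : ∑' r', M.lamrj P n r' j < Λ) :
    M.lamrj P n r j ≤ Λ :=
  (hs.le_tsum r fun r' _ => M.lamrj_nonneg n r' j).trans h.le

lemma hasSubgaussianMGF_score {n i r : ℕ} {j : Fin (M.p n)} {γ Λ : ℝ} (hΛ : 0 ≤ Λ)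
    (hint : ∀ x : ℝ, Integrable (fun ω => exp (x * M.score n i r j ω)) P)
    (hmgf : ∀ x : ℝ, ∫ ω, exp (x * M.score n i r j ω) ∂P ≤
      exp (x ^ 2 * γ ^ 2 * M.lamrj P n r j / 2))
    (hlam : M.lamrj P n r j ≤ Λ) :
    HasSubgaussianMGF (M.score n i r j) ⟨γ ^ 2 * Λ, by positivity⟩ P where
  integrable_exp_mul := hint
  mgf_le x := by
    refine (hmgf x).trans (exp_le_exp.2 ?_)
    change _ ≤ γ ^ 2 * Λ * x ^ 2 / 2
    nlinarith [mul_le_mul_of_nonneg_left hlam (sq_nonneg (γ * x))]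

end Scores

lemma abs_inner_cusum_obs_sub_le {n r s K : ℕ} {j : Fin (M.p n)} {C c L : ℝ} {ω : α}
    (hn : 0 < n) (hL : 1 ≤ L) (hC : ‖M.μ0 n j‖ ≤ C ∧ ‖M.μ1 n j‖ ≤ C)
    (hst : s ≤ M.τ n + K) (hts : M.τ n ≤ s + K)
    (hwindow : ∀ i ∈ Finset.Ico (M.τ n - K) (M.τ n + K), |M.score n i r j ω| ≤ 2 * √(c * L))
    (hsum : |∑ i ∈ Finset.range n, M.score n i r j ω| ≤ 2 * √(c * L) * √n) :
    |⟪cusum n s (fun i => M.obs n i j) ω - cusum n (M.τ n) (fun i => M.obs n i j) ω, M.ψ r⟫|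
      ≤ 3 * K * (C * ‖M.ψ r‖ + 2 * √c) * √(L / n) := by
  have hC0 : 0 ≤ C := (norm_nonneg _).trans hC.1
  have hsL : 1 ≤ √L := one_le_sqrt.2 hL
  have hsn : √n ≤ n := sqrt_le_self_iff.2 (Or.inr (by exact_mod_cast hn))
  set B := (C * ‖M.ψ r‖ + 2 * √c) * √L
  have hB' : C * ‖M.ψ r‖ + 2 * √(c * L) ≤ B := by
    rw [sqrt_mul' c (by linarith)]
    nlinarith [mul_nonneg (mul_nonneg hC0 (norm_nonneg (M.ψ r))) (sub_nonneg.2 hsL)]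
  have hB : ∀ i ∈ Finset.Ico (M.τ n - K) (M.τ n + K), |⟪M.obs n i j ω, M.ψ r⟫| ≤ B := by
    intro i hi
    rw [M.inner_obs]
    calc |⟪M.mean n i j, M.ψ r⟫ + M.score n i r j ω|
        ≤ C * ‖M.ψ r‖ + 2 * √(c * L) :=
          (abs_add_le _ _).trans (add_le_add (M.abs_inner_mean_le hC i r) (hwindow i hi))
      _ ≤ B := hB'
  have hS : |∑ i ∈ Finset.range n, ⟪M.obs n i j ω, M.ψ r⟫| ≤ n * B := by
    simp only [M.inner_obs, Finset.sum_add_distrib]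
    calc |∑ i ∈ Finset.range n, ⟪M.mean n i j, M.ψ r⟫ + ∑ i ∈ Finset.range n, M.score n i r j ω|
        ≤ n * (C * ‖M.ψ r‖) + 2 * √(c * L) * √n := by
          refine (abs_add_le _ _).trans (add_le_add ?_ hsum)
          refine (Finset.abs_sum_le_sum_abs _ _).trans ?_
          refine (Finset.sum_le_sum fun i _ => M.abs_inner_mean_le hC i r).trans_eq ?_
          rw [Finset.sum_const, Finset.card_range, nsmul_eq_mul]
      _ ≤ n * B := by nlinarith [sqrt_nonneg (c * L)]
  rw [inner_sub_left, inner_cusum, inner_cusum]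
  refine (abs_cusum_sub_cusum_le hn hst hts hB hS).trans_eq ?_
  rw [sqrt_div' _ (Nat.cast_nonneg n)]
  ring

end SpatialModel

open SpatialModel in
open Classical in
theorem cusum_changepoint_stability_general
    (M : SpatialModel Ω H) (P : Measure Ω) [IsProbabilityMeasure P]
    (R : ℕ)
    (hpTop : Tendsto (fun n => M.p n) atTop atTop)
    -- i.i.d. mean-zero errors with fourth moments
    (hIndep : ∀ n, iIndepFun (m := fun _ => (inferInstance : MeasurableSpace (Fin (M.p n) → H)))
      (fun i => fun ω j => M.ε n i j ω) P)
    -- Assumption 6: sub-Gaussian standardized scores, uniformly summable eigenvalues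
    (γ : ℝ) (hγ : 0 < γ)
    (hSubGInt : ∀ n i j, ∀ r < R, ∀ x : ℝ,
      Integrable (fun ω => Real.exp (x * M.score n i r j ω)) P)
    (hSubG : ∀ n i j, ∀ r < R, ∀ x : ℝ,
      ∫ ω, Real.exp (x * M.score n i r j ω) ∂P ≤
        Real.exp (x^2 * γ^2 * M.lamrj P n r j / 2))
    (Mbd : ℝ)
    (hSumm : ∀ n j, Summable (fun r => M.lamrj P n r j))
    (hMbd : ∀ n j, ∑' r, M.lamrj P n r j < Mbd)
    -- uniformly bounded mean functions
    (hμbdd : ∃ C : ℝ, ∀ n (j : Fin (M.p n)), ‖M.μ0 n j‖ ≤ C ∧ ‖M.μ1 n j‖ ≤ C)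
    -- the change-point estimator τ̂ (argmax of the kernel CUSUM statistic),
    -- consistent in the sense |τ̂ − τ*| = O_p(1)
    (τhat : ℕ → Ω → ℕ)
    (hτhatDev : IsBigOp P (fun n ω => |(τhat n ω : ℝ) - (M.τ n : ℝ)|) (fun _ => 1)) :
    -- conclusion
    ∀ r < R, IsBigOp P
      (fun n ω => ⨆ j : Fin (M.p n),
        |⟪cusum n (τhat n ω) (fun i => M.obs n i j) ω -
           cusum n (M.τ n) (fun i => M.obs n i j) ω, M.ψ r⟫|)
      (fun n => Real.sqrt (Real.log (M.p n) / (n : ℝ))) := by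
  intro r hr
  obtain ⟨C, hC⟩ := hμbdd
  obtain ⟨n₀, hn₀⟩ := (hpTop.eventually_gt_atTop 0).exists
  have hMbd0 : 0 < Mbd :=
    (tsum_nonneg fun r => M.lamrj_nonneg n₀ r ⟨0, hn₀⟩).trans_lt (hMbd n₀ ⟨0, hn₀⟩)
  set c : ℝ≥0 := ⟨γ ^ 2 * Mbd, by positivity⟩
  have hc : 0 < c := show (0 : ℝ) < γ ^ 2 * Mbd by positivity
  have hsubG : ∀ n j i, HasSubgaussianMGF (M.score n i r j) c P := fun n j i =>
    M.hasSubgaussianMGF_score hMbd0.le (hSubGInt n i j r hr) (hSubG n i j r hr)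
      (M.lamrj_le_of_tsum_lt (hSumm n j) (hMbd n j))
  have hind : ∀ n (j : Fin (M.p n)), iIndepFun (fun i => M.score n i r j) P := fun n j =>
    (hIndep n).comp (fun _ v => ⟪v j, M.ψ r⟫) fun _ =>
      (measurable_pi_apply j).inner measurable_const
  refine isBigOp_of_forall_le_off (fun n => sqrt_nonneg _) hτhatDev fun K =>
    ⟨3 * ⌈K⌉₊ * (C * ‖M.ψ r‖ + 2 * √c), fun n => exceedanceEvent (fun j i => M.score n i r j)
      (Finset.Ico (M.τ n - ⌈K⌉₊) (M.τ n + ⌈K⌉₊)) n (2 * √(c * log (M.p n))),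
      tendsto_measureReal_exceedanceEvent hpTop hc hsubG hind (k := 2 * ⌈K⌉₊)
        fun n => by simp only [Nat.card_Ico]; omega, ?_⟩
  filter_upwards [eventually_gt_atTop 0, hpTop.eventually_ge_atTop 3] with n hn hp ω hω hD
  rw [abs_abs] at hD
  have hC0 : 0 ≤ C := (norm_nonneg _).trans (hC n ⟨0, by omega⟩).1
  rw [abs_of_nonneg (Real.iSup_nonneg fun j => abs_nonneg _)]
  refine Real.iSup_le (fun j => ?_) (by positivity)
  obtain ⟨hsum, hwindow⟩ := abs_le_of_notMem_exceedanceEvent hω j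
  exact M.abs_inner_cusum_obs_sub_le hn (one_le_log_of_three_le (by exact_mod_cast hp)) (hC n j)
    (le_add_natCeil_of_abs_sub_le hD)
    (le_add_natCeil_of_abs_sub_le ((abs_sub_comm _ _).trans_le hD)) hwindow hsum

open SpatialModel in
open Classical in
theorem cusum_changepoint_stability
    (M : SpatialModel Ω H) (P : Measure Ω) [IsProbabilityMeasure P]
    (R : ℕ) (hR : 0 < R)
    (hp0 : ∀ n, 0 < M.p n)
    (hpTop : Tendsto (fun n => M.p n) atTop atTop)
    -- one change point τ* = τ n with τ*/n → θ0 ∈ (0,1)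
    (hτ : ∀ n, M.τ n ≤ n)
    (θ0 : ℝ) (hθ0 : θ0 ∈ Set.Ioo (0:ℝ) 1)
    (hτθ : Tendsto (fun n => (M.τ n : ℝ) / (n : ℝ)) atTop (𝓝 θ0))
    -- i.i.d. mean-zero errors with fourth moments
    (hMeas : ∀ n i j, Measurable (M.ε n i j))
    (hIndep : ∀ n, iIndepFun (m := fun _ => (inferInstance : MeasurableSpace (Fin (M.p n) → H)))
      (fun i => fun ω j => M.ε n i j ω) P)
    (hIdent : ∀ n i, IdentDistrib (fun ω (j : Fin (M.p n)) => M.ε n i j ω)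
      (fun ω j => M.ε n 0 j ω) P P)
    (hZero : ∀ n i j, ∫ ω, M.ε n i j ω ∂P = 0)
    (hMom4 : ∀ n i j, MemLp (M.ε n i j) 4 P)
    -- weak separability: ψ orthonormal and total, scores uncorrelated across r
    (hON : Orthonormal ℝ M.ψ)
    (hTotal : (Submodule.span ℝ (Set.range M.ψ)).topologicalClosure = ⊤)
    (hUncorr : ∀ n i r r', r ≠ r' → ∀ j k,
      ∫ ω, M.score n i r j ω * M.score n i r' k ω ∂P = 0)
    -- eigen-gap assumption
    (hGap : ∀ n, ∀ r' < R, ∀ r < r', M.lambar P n r' < M.lambar P n r)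
    (hPos : ∀ n, ∀ r < R, 0 < M.lambar P n r)
    (c1 c2 : ℝ) (hc1 : 0 < c1)
    (hSigLow : ∀ n, ∀ r < R, ∀ v : Fin (M.p n) → ℝ,
      c1 * ∑ j, (v j)^2 ≤ ∑ j, ∑ k, v j * M.sigr P n r j k * v k)
    (hSigHigh : ∀ n, ∀ r < R, ∀ v : Fin (M.p n) → ℝ,
      ∑ j, ∑ k, v j * M.sigr P n r j k * v k ≤ c2 * ∑ j, (v j)^2)
    -- Assumption 6: sub-Gaussian standardized scores, uniformly summable eigenvalues
    (γ : ℝ) (hγ : 0 < γ)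
    (hSubGInt : ∀ n i j, ∀ r < R, ∀ x : ℝ,
      Integrable (fun ω => Real.exp (x * M.score n i r j ω)) P)
    (hSubG : ∀ n i j, ∀ r < R, ∀ x : ℝ,
      ∫ ω, Real.exp (x * M.score n i r j ω) ∂P ≤
        Real.exp (x^2 * γ^2 * M.lamrj P n r j / 2))
    (Mbd : ℝ)
    (hSumm : ∀ n j, Summable (fun r => M.lamrj P n r j))
    (hMbd : ∀ n j, ∑' r, M.lamrj P n r j < Mbd)
    -- uniformly bounded mean functions
    (hμbdd : ∃ C : ℝ, ∀ n (j : Fin (M.p n)), ‖M.μ0 n j‖ ≤ C ∧ ‖M.μ1 n j‖ ≤ C)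
    -- the change-point estimator τ̂ (argmax of the kernel CUSUM statistic),
    -- consistent in the sense |τ̂ − τ*| = O_p(1)
    (τhat : ℕ → Ω → ℕ)
    (hτhatMeas : ∀ n, Measurable (τhat n))
    (hτhatRange : ∀ n ω, 1 < n → 1 ≤ τhat n ω ∧ τhat n ω < n)
    (hτhatDev : IsBigOp P (fun n ω => |(τhat n ω : ℝ) - (M.τ n : ℝ)|) (fun _ => 1)) :
    -- conclusion
    ∀ r < R, IsBigOp P
      (fun n ω => ⨆ j : Fin (M.p n),
        |⟪cusum n (τhat n ω) (fun i => M.obs n i j) ω -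
           cusum n (M.τ n) (fun i => M.obs n i j) ω, M.ψ r⟫|)
      (fun n => Real.sqrt (Real.log (M.p n) / (n : ℝ))) :=
  cusum_changepoint_stability_general M P R hpTop hIndep γ hγ hSubGInt hSubG Mbd hSumm hMbd hμbdd
    τhat hτhatDev

end SpatialFDA13
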